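/- Let t be a real number with 2/(n+1) ≤ t < 2/n and let s ∈ ℝ. Then the homology class [y_n] ∈ H(C∞, ∂) lies in the image of the map H(C_{t,s}, ∂) → H(C∞, ∂) induced by the inclusion C_{t,s} ⊆ C∞ if and only if s ≥ (2 − t)/2. (This is the algebraic content of the second regime of Theorem C of the paper, where Υ_{T_{2,3;n,1}}(t) = t − 2 for t slightly larger than 2/(1+n).) -/

import Mathlib

/-- The labels of the `F[U,U⁻¹]`-basis `S` of `CFK^∞(T_{2,3;n,1})`. -/
inductive Gen : Type
  | x (k : ℕ) | x' (k : ℕ) | y (k : ℕ) | y' (k : ℕ) | z (k : ℕ) | w (k : ℕ)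
  deriving DecidableEq

/-- The validity predicate carving out the basis set `S` for a given `n`:
`S = {y_n, x_n, y'_1} ∪ {x'_k, y'_k : 2 ≤ k ≤ n} ∪ {x_k, z_k : 2 ≤ k ≤ n−1} ∪ {y_k, w_k : 1 ≤ k ≤ n−1}`,
where we encode `x_n` as `.x n`, `y_n` as `.y n` and `y'_1` as `.y' 1`. -/
def Gen.Valid (n : ℕ) : Gen → Prop
  | .x k => 2 ≤ k ∧ k ≤ n
  | .x' k => 2 ≤ k ∧ k ≤ n
  | .y k => 1 ≤ k ∧ k ≤ n
  | .y' k => 1 ≤ k ∧ k ≤ n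
  | .z k => 2 ≤ k ∧ k ≤ n - 1
  | .w k => 1 ≤ k ∧ k ≤ n - 1

/-- The algebraic filtration `A₁` on `S`. -/
def Gen.A1 : Gen → ℤ
  | .x _ => 1
  | .x' k => (k : ℤ)
  | .y _ => 0
  | .y' k => (k : ℤ)
  | .z _ => 1
  | .w _ => 0

/-- The Alexander filtration `A₂` on `S`. -/
def Gen.A2 : Gen → ℤ
  | .x k => (k : ℤ)
  | .x' _ => 1
  | .y k => (k : ℤ)
  | .y' _ => 0
  | .z _ => 1
  | .w _ => 0

/-- The Maslov grading `M` on `S`. -/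
def Gen.M : Gen → ℤ
  | .x _ => 1
  | .x' _ => 1
  | .y _ => 0
  | .y' _ => 0
  | .z _ => 0
  | .w _ => -1

/-- The vertical differential `∂_V` on the basis `S`:
`∂_V x_n = y'_1`, `∂_V x_k = z_k` (`2 ≤ k ≤ n−1`), `∂_V x'_k = y'_k` (`2 ≤ k ≤ n`),
`∂_V y_k = w_k` (`1 ≤ k ≤ n−1`), and `∂_V σ = 0` otherwise. -/
def Gen.dV (n : ℕ) : Gen → Option Gen
  | .x k => if k = n then some (.y' 1) else some (.z k)
  | .x' k => some (.y' k)
  | .y k => if k = n then none else some (.w k)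
  | _ => none

/-- The basis set `S`. -/
abbrev SGen (n : ℕ) := {g : Gen // g.Valid n}

/-- `C^∞` as an `F = ℤ/2`-vector space with basis `{U^m σ : m ∈ ℤ, σ ∈ S}`;
the pair `(m, σ)` encodes the basis vector `U^m σ`, whose bifiltration is
`(A₁ σ − m, A₂ σ − m)` and whose Maslov grading is `M σ − 2m`.  (The value of a
finitely supported function at `(m, σ)` is the coefficient of `U^m σ`.) -/
abbrev Cinf (n : ℕ) := (ℤ × SGen n) →₀ ZMod 2

/-- The basis vector `U^m σ` of `C^∞`. -/
noncomputable def gen (n : ℕ) (m : ℤ) (σ : SGen n) : Cinf n :=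
  Finsupp.single (m, σ) 1

/-!
`C_{t,s}` is spanned by the `U^m σ` whose `t`-grading `(t/2)·A₂ + (1 - t/2)·A₁` is at most
`s`. Put `s₀ = (2 - t)/2`. The cycle `y_n - ∂x_n` is homologous to `y_n`, and by the grading
constraints on `∂` its terms are `U⁰ y_k` with `k < n` and `U⁰ y'_1`, whose `t`-gradings
`t k / 2` and `1 - t/2` are at most `s₀` because `t n < 2`. Conversely, if `s < s₀`, then
`U⁰ y_n` and every `U⁰ y'_l` have `t`-grading above `s` (as `t (n + 1) ≥ 2`), so
`y_n - v = ∂ξ` with `v ∈ C_{t,s}` forces `∂ξ` to vanish at every `y'_l`. Only `x'_k`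
(`k ≥ l`) and, for `l = 1`, `x_n` reach `y'_l`, each vertically with coefficient `1`;
descending induction on `l` kills the `x'`-coefficients of `ξ` and then its `x_n`-coefficient.
But `x_n` is the only generator reaching `y_n`, so `∂ξ` would vanish at `y_n`, while `y_n - v`
does not.
-/

theorem Finsupp.linearMap_apply_eq_of_unique_source {α β R : Type*} [CommSemiring R]
    (f : (α →₀ R) →ₗ[R] (β →₀ R)) (ξ : α →₀ R) (p : β) (q₀ : α)
    (h : ∀ q, q ≠ q₀ → ξ q = 0 ∨ f (Finsupp.single q 1) p = 0) :
    f ξ p = ξ q₀ * f (Finsupp.single q₀ 1) p := by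
  have hsum : f ξ p = ∑ q ∈ ξ.support, ξ q * f (Finsupp.single q 1) p := by
    conv_lhs => rw [← Finsupp.sum_single ξ]
    simp only [Finsupp.sum, map_sum, Finsupp.finsetSum_apply]
    refine Finset.sum_congr rfl fun q _ => ?_
    rw [← Finsupp.smul_single_one, map_smul, Finsupp.smul_apply, smul_eq_mul]
  rw [hsum, Finset.sum_eq_single q₀]
  · intro q _ hq
    rcases h q hq with h | h <;> simp [h]
  · intro hq
    rw [Finsupp.notMem_support_iff.mp hq, zero_mul]

namespace Cinf

variable {n : ℕ}

theorem mem_span_gen_iff (P : ℤ → SGen n → Prop) (v : Cinf n) :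
    v ∈ Submodule.span (ZMod 2)
        {u : Cinf n | ∃ (m : ℤ) (σ : SGen n), P m σ ∧ u = gen n m σ} ↔
      ∀ p ∈ v.support, P p.1 p.2 := by
  have hset : {u : Cinf n | ∃ (m : ℤ) (σ : SGen n), P m σ ∧ u = gen n m σ} =
      (fun p => Finsupp.single p 1) '' {p | P p.1 p.2} := by
    ext u
    simp [gen, eq_comm]
  rw [hset, ← Finsupp.supported_eq_span_single, Finsupp.mem_supported]
  rfl

def UEquivariant (d : Cinf n →ₗ[ZMod 2] Cinf n) : Prop :=
  ∀ (m : ℤ) (σ : SGen n) (m' : ℤ) (σ' : SGen n),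
    d (gen n m σ) (m', σ') = d (gen n (m + 1) σ) (m' + 1, σ')

def LowersMaslovByOne (d : Cinf n →ₗ[ZMod 2] Cinf n) : Prop :=
  ∀ (m : ℤ) (σ : SGen n) (m' : ℤ) (σ' : SGen n),
    d (gen n m σ) (m', σ') ≠ 0 → σ'.1.M - 2 * m' = σ.1.M - 2 * m - 1

def Filtered (d : Cinf n →ₗ[ZMod 2] Cinf n) : Prop :=
  ∀ (m : ℤ) (σ : SGen n) (m' : ℤ) (σ' : SGen n),
    d (gen n m σ) (m', σ') ≠ 0 → σ'.1.A1 - m' ≤ σ.1.A1 - m ∧ σ'.1.A2 - m' ≤ σ.1.A2 - m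

def HasVerticalPartDV (d : Cinf n →ₗ[ZMod 2] Cinf n) : Prop :=
  ∀ (σ : SGen n) (m' : ℤ) (σ' : SGen n),
    σ'.1.A1 - m' = σ.1.A1 →
      d (gen n 0 σ) (m', σ') = if σ.1.dV n = some σ'.1 ∧ m' = 0 then 1 else 0

structure IsModelDifferential (d : Cinf n →ₗ[ZMod 2] Cinf n) : Prop where
  uEquivariant : UEquivariant d
  lowersMaslovByOne : LowersMaslovByOne d
  filtered : Filtered d
  hasVerticalPartDV : HasVerticalPartDV d

variable {d : Cinf n →ₗ[ZMod 2] Cinf n}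

theorem UEquivariant.coeff_gen_eq_shift (hU : UEquivariant d) (m : ℤ) (σ : SGen n) (m' : ℤ)
    (σ' : SGen n) : d (gen n m σ) (m', σ') = d (gen n 0 σ) (m' - m, σ') := by
  induction m using Int.induction_on generalizing m' with
  | zero => simp
  | succ k ih => rw [← sub_add_cancel m' 1, ← hU, ih]; ring_nf
  | pred k ih => rw [hU, sub_add_cancel, ih]; ring_nf

theorem coeff_gen_of_A1_eq (hU : UEquivariant d) (hV : HasVerticalPartDV d) {m m' : ℤ}
    {σ σ' : SGen n} (h : σ'.1.A1 - m' = σ.1.A1 - m) :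
    d (gen n m σ) (m', σ') = if σ.1.dV n = some σ'.1 ∧ m' = m then 1 else 0 := by
  rw [hU.coeff_gen_eq_shift, hV σ _ σ' (by omega)]
  simp only [sub_eq_zero]

theorem dV_eq_of_coeff_ne_zero (hU : UEquivariant d) (hV : HasVerticalPartDV d) {m m' : ℤ}
    {σ σ' : SGen n} (h : d (gen n m σ) (m', σ') ≠ 0) (hA : σ'.1.A1 - m' = σ.1.A1 - m) :
    σ.1.dV n = some σ'.1 := by
  rw [coeff_gen_of_A1_eq hU hV hA] at h
  by_contra h'
  simp [h'] at h

theorem grading_constraints_of_coeff_ne_zero (hd : IsModelDifferential d) {m m' : ℤ}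
    {σ σ' : SGen n} (h : d (gen n m σ) (m', σ') ≠ 0) :
    σ'.1.M - 2 * m' = σ.1.M - 2 * m - 1 ∧ σ'.1.A1 - m' ≤ σ.1.A1 - m ∧
      σ'.1.A2 - m' ≤ σ.1.A2 - m ∧ (σ'.1.A1 - m' = σ.1.A1 - m → σ.1.dV n = some σ'.1) :=
  ⟨hd.lowersMaslovByOne _ _ _ _ h, (hd.filtered _ _ _ _ h).1, (hd.filtered _ _ _ _ h).2,
    dV_eq_of_coeff_ne_zero hd.uEquivariant hd.hasVerticalPartDV h⟩

theorem d_gen_y_top_eq_zero (hd : IsModelDifferential d) (hn : 1 ≤ n) :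
    d (gen n 0 ⟨.y n, hn, le_rfl⟩) = 0 := by
  ext ⟨m', σ', hval⟩
  by_contra h
  obtain ⟨hMas, hA1, hA2, hVer⟩ := grading_constraints_of_coeff_ne_zero hd h
  cases σ' <;>
    simp [Gen.M, Gen.A1, Gen.A2, Gen.dV, Gen.Valid] at hMas hA1 hA2 hVer hval <;> omega

theorem target_of_coeff_x_top_ne_zero (hd : IsModelDifferential d) (hn : 2 ≤ n) {m' : ℤ}
    {σ' : SGen n} (h : d (gen n 0 ⟨.x n, hn, le_rfl⟩) (m', σ') ≠ 0) :
    m' = 0 ∧ ((∃ k, σ'.1 = .y k) ∨ σ'.1 = .y' 1) := by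
  obtain ⟨hMas, hA1, hA2, hVer⟩ := grading_constraints_of_coeff_ne_zero hd h
  obtain ⟨σ', hval⟩ := σ'
  cases σ' <;>
    simp [Gen.M, Gen.A1, Gen.A2, Gen.dV, Gen.Valid] at hMas hA1 hA2 hVer hval ⊢ <;> omega

theorem source_of_coeff_y'_ne_zero (hd : IsModelDifferential d) {l : ℕ}
    (hl : (Gen.y' l).Valid n) {m : ℤ} {σ : SGen n}
    (h : d (gen n m σ) (0, ⟨.y' l, hl⟩) ≠ 0) :
    m = 0 ∧ ((∃ k, l ≤ k ∧ σ.1 = .x' k) ∨ (l = 1 ∧ σ.1 = .x n)) := by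
  obtain ⟨hMas, hA1, hA2, hVer⟩ := grading_constraints_of_coeff_ne_zero hd h
  obtain ⟨σ, hval⟩ := σ
  cases σ <;>
    simp [Gen.M, Gen.A1, Gen.A2, Gen.dV, Gen.Valid, ite_eq_iff] at hMas hA1 hA2 hVer hval hl ⊢ <;>
    omega

theorem source_of_coeff_y_top_ne_zero (hd : IsModelDifferential d) (hn : 1 ≤ n)
    {m : ℤ} {σ : SGen n} (h : d (gen n m σ) (0, ⟨.y n, hn, le_rfl⟩) ≠ 0) :
    m = 0 ∧ σ.1 = .x n := by
  obtain ⟨hMas, hA1, hA2, -⟩ := grading_constraints_of_coeff_ne_zero hd h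
  obtain ⟨σ, hval⟩ := σ
  cases σ <;>
    simp [Gen.M, Gen.A1, Gen.A2, Gen.Valid] at hMas hA1 hA2 hval ⊢ <;> omega

theorem coeff_x'_eq_zero (hd : IsModelDifferential d) {ξ : Cinf n}
    (hξ : ∀ l (hl : (Gen.y' l).Valid n), d ξ (0, ⟨.y' l, hl⟩) = 0)
    (l : ℕ) (hl : (Gen.x' l).Valid n) : ξ (0, ⟨.x' l, hl⟩) = 0 := by
  induction hj : n - l using Nat.strong_induction_on generalizing l with
  | _ j ih =>
    have hl' : (Gen.y' l).Valid n := ⟨by have := hl.1; omega, hl.2⟩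
    have hvert : d (gen n 0 ⟨.x' l, hl⟩) (0, ⟨.y' l, hl'⟩) = 1 := by
      rw [coeff_gen_of_A1_eq hd.uEquivariant hd.hasVerticalPartDV (by simp [Gen.A1])]
      simp [Gen.dV]
    have key := hξ l hl'
    rw [Finsupp.linearMap_apply_eq_of_unique_source d ξ _ (0, ⟨.x' l, hl⟩)] at key
    · rwa [← gen, hvert, mul_one] at key
    rintro ⟨m, σ, hσ⟩ hq
    refine or_iff_not_imp_right.2 fun hne => ?_
    obtain ⟨rfl, ⟨k, hlk, rfl⟩ | ⟨rfl, -⟩⟩ := source_of_coeff_y'_ne_zero hd hl' hne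
    · have hlk : l < k := lt_of_le_of_ne hlk fun h => hq (by subst h; rfl)
      exact ih (n - k) (by have := hσ.2; omega) k hσ rfl
    · exact absurd hl.1 (by norm_num)

theorem coeff_x_top_eq_zero (hd : IsModelDifferential d) {ξ : Cinf n}
    (hξ : ∀ l (hl : (Gen.y' l).Valid n), d ξ (0, ⟨.y' l, hl⟩) = 0) (hn : 2 ≤ n) :
    ξ (0, ⟨.x n, hn, le_rfl⟩) = 0 := by
  have hl : (Gen.y' 1).Valid n := ⟨le_rfl, by omega⟩
  have hvert : d (gen n 0 ⟨.x n, hn, le_rfl⟩) (0, ⟨.y' 1, hl⟩) = 1 := by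
    rw [coeff_gen_of_A1_eq hd.uEquivariant hd.hasVerticalPartDV (by simp [Gen.A1])]
    simp [Gen.dV]
  have key := hξ 1 hl
  rw [Finsupp.linearMap_apply_eq_of_unique_source d ξ _ (0, ⟨.x n, hn, le_rfl⟩)] at key
  · rwa [← gen, hvert, mul_one] at key
  rintro ⟨m, σ, hσ⟩ hq
  refine or_iff_not_imp_right.2 fun hne => ?_
  obtain ⟨rfl, ⟨k, -, rfl⟩ | ⟨-, rfl⟩⟩ := source_of_coeff_y'_ne_zero hd hl hne
  · exact coeff_x'_eq_zero hd hξ k hσ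
  · exact absurd rfl hq

theorem d_apply_y_top (hd : IsModelDifferential d) (hn : 2 ≤ n)
    (hEnd : d (gen n 0 ⟨.x n, hn, le_rfl⟩) (0, ⟨.y n, one_le_two.trans hn, le_rfl⟩) = 1)
    (ξ : Cinf n) :
    d ξ (0, ⟨.y n, one_le_two.trans hn, le_rfl⟩) = ξ (0, ⟨.x n, hn, le_rfl⟩) := by
  rw [Finsupp.linearMap_apply_eq_of_unique_source d ξ _ (0, ⟨.x n, hn, le_rfl⟩)]
  · rw [← gen, hEnd, mul_one]
  rintro ⟨m, σ, hσ⟩ hq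
  refine or_iff_not_imp_right.2 fun hne => ?_
  obtain ⟨rfl, rfl⟩ := source_of_coeff_y_top_ne_zero hd (by omega) hne
  exact absurd rfl hq

theorem d_apply_y_top_eq_zero (hd : IsModelDifferential d) (hn : 2 ≤ n)
    (hEnd : d (gen n 0 ⟨.x n, hn, le_rfl⟩) (0, ⟨.y n, one_le_two.trans hn, le_rfl⟩) = 1)
    {ξ : Cinf n}
    (hξ : ∀ l (hl : (Gen.y' l).Valid n), d ξ (0, ⟨.y' l, hl⟩) = 0) :
    d ξ (0, ⟨.y n, one_le_two.trans hn, le_rfl⟩) = 0 := by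
  rw [d_apply_y_top hd hn hEnd, coeff_x_top_eq_zero hd hξ hn]

theorem mem_support_sub_d_gen_x_top (hd : IsModelDifferential d) (hn : 2 ≤ n)
    (hEnd : d (gen n 0 ⟨.x n, hn, le_rfl⟩) (0, ⟨.y n, one_le_two.trans hn, le_rfl⟩) = 1)
    {p : ℤ × SGen n}
    (hp : p ∈ (gen n 0 ⟨.y n, one_le_two.trans hn, le_rfl⟩ -
      d (gen n 0 ⟨.x n, hn, le_rfl⟩)).support) :
    p.1 = 0 ∧ ((∃ k < n, p.2.1 = .y k) ∨ p.2.1 = .y' 1) := by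
  obtain ⟨m', σ', hσ'⟩ := p
  rw [Finsupp.mem_support_iff, Finsupp.sub_apply] at hp
  by_cases htop : (m', (⟨σ', hσ'⟩ : SGen n)) = (0, ⟨.y n, one_le_two.trans hn, le_rfl⟩)
  · rw [htop, hEnd, gen, Finsupp.single_eq_same, sub_self] at hp
    exact absurd rfl hp
  rw [gen, Finsupp.single_eq_of_ne htop, zero_sub, neg_ne_zero] at hp
  obtain ⟨rfl, ⟨k, rfl⟩ | rfl⟩ := target_of_coeff_x_top_ne_zero hd hn hp
  · refine ⟨rfl, Or.inl ⟨k, lt_of_le_of_ne hσ'.2 fun hk => htop ?_, rfl⟩⟩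
    subst hk
    rfl
  · exact ⟨rfl, Or.inr rfl⟩

noncomputable def tGrading (t : ℝ) (m : ℤ) (σ : SGen n) : ℝ :=
  t / 2 * ((σ.1.A2 - m : ℤ) : ℝ) + (1 - t / 2) * ((σ.1.A1 - m : ℤ) : ℝ)

theorem le_line_iff_tGrading_le {t : ℝ} (ht : 0 < t) (s : ℝ) (m : ℤ) (σ : SGen n) :
    ((σ.1.A2 - m : ℤ) : ℝ) ≤ (2 / t) * s + (1 - 2 / t) * ((σ.1.A1 - m : ℤ) : ℝ) ↔
      tGrading t m σ ≤ s := by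
  rw [tGrading, ← sub_nonneg, ← sub_nonneg (b := _ + _)]
  have h : (2 / t) * s + (1 - 2 / t) * ((σ.1.A1 - m : ℤ) : ℝ) - ((σ.1.A2 - m : ℤ) : ℝ) =
      (2 / t) *
        (s - (t / 2 * ((σ.1.A2 - m : ℤ) : ℝ) + (1 - t / 2) * ((σ.1.A1 - m : ℤ) : ℝ))) := by
    field_simp
    ring
  rw [h, mul_nonneg_iff_of_pos_left (by positivity)]

theorem gen_y_top_sub_ne_d_of_lt (hd : IsModelDifferential d) (hn : 2 ≤ n)
    (hEnd : d (gen n 0 ⟨.x n, hn, le_rfl⟩) (0, ⟨.y n, one_le_two.trans hn, le_rfl⟩) = 1)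
    {t s : ℝ} (ht : t ≤ 2) (htn : 2 ≤ t * (n + 1)) (hs : s < (2 - t) / 2) {v : Cinf n}
    (hv : ∀ p ∈ v.support, tGrading t p.1 p.2 ≤ s) (ξ : Cinf n) :
    gen n 0 ⟨.y n, one_le_two.trans hn, le_rfl⟩ - v ≠ d ξ := by
  intro hξ
  have hcoeff : ∀ σ, s < tGrading t 0 σ →
      d ξ (0, σ) = gen n 0 ⟨.y n, one_le_two.trans hn, le_rfl⟩ (0, σ) := by
    intro σ hσ
    have hvσ : v (0, σ) = 0 := Finsupp.notMem_support_iff.1 fun h => (hv _ h).not_gt hσ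
    rw [← hξ, Finsupp.sub_apply, hvσ, sub_zero]
  have hy' : ∀ l (hl : (Gen.y' l).Valid n), d ξ (0, ⟨.y' l, hl⟩) = 0 := by
    intro l hl
    have hl1 : (1 : ℝ) ≤ l := by exact_mod_cast hl.1
    rw [hcoeff _ (by simp [tGrading, Gen.A1, Gen.A2]; nlinarith), gen, Finsupp.single_apply]
    simp [Subtype.ext_iff]
  have hy := d_apply_y_top_eq_zero hd hn hEnd hy'
  rw [hcoeff _ (by simp [tGrading, Gen.A1, Gen.A2]; nlinarith), gen,
    Finsupp.single_eq_same] at hy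
  exact one_ne_zero hy

theorem tGrading_le_of_mem_support_sub_d_gen_x_top (hd : IsModelDifferential d) (hn : 2 ≤ n)
    (hEnd : d (gen n 0 ⟨.x n, hn, le_rfl⟩) (0, ⟨.y n, one_le_two.trans hn, le_rfl⟩) = 1)
    {t s : ℝ} (htn : t * n < 2) (hs : (2 - t) / 2 ≤ s) {p : ℤ × SGen n}
    (hp : p ∈ (gen n 0 ⟨.y n, one_le_two.trans hn, le_rfl⟩ -
      d (gen n 0 ⟨.x n, hn, le_rfl⟩)).support) :
    tGrading t p.1 p.2 ≤ s := by
  obtain ⟨hp0, ⟨k, hk, hpk⟩ | hp1⟩ := mem_support_sub_d_gen_x_top hd hn hEnd hp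
  · have hk' : (k : ℝ) + 1 ≤ n := by exact_mod_cast hk
    simp [tGrading, hp0, hpk, Gen.A1, Gen.A2]
    nlinarith
  · simp [tGrading, hp0, hp1, Gen.A1, Gen.A2]
    linarith

end Cinf

theorem statement_9 (n : ℕ) (hn : 2 ≤ n)
    (d : Cinf n →ₗ[ZMod 2] Cinf n)
    -- (i) ∂ ∘ ∂ = 0
    (hdd : ∀ v, d (d v) = 0)
    -- F[U,U⁻¹]-linearity: ∂ commutes with multiplication by U (the shift (m,σ) ↦ (m+1,σ))
    (hU : ∀ (m : ℤ) (σ : SGen n) (m' : ℤ) (σ' : SGen n),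
      d (gen n m σ) (m', σ') = d (gen n (m + 1) σ) (m' + 1, σ'))
    -- (ii) ∂ is homogeneous of Maslov degree −1
    (hM : ∀ (m : ℤ) (σ : SGen n) (m' : ℤ) (σ' : SGen n),
      d (gen n m σ) (m', σ') ≠ 0 → σ'.1.M - 2 * m' = σ.1.M - 2 * m - 1)
    -- (iii) ∂ strictly drops the bifiltration
    (hF : ∀ (m : ℤ) (σ : SGen n) (m' : ℤ) (σ' : SGen n),
      d (gen n m σ) (m', σ') ≠ 0 →
        σ'.1.A1 - m' ≤ σ.1.A1 - m ∧ σ'.1.A2 - m' ≤ σ.1.A2 - m ∧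
          ¬(σ'.1.A1 - m' = σ.1.A1 - m ∧ σ'.1.A2 - m' = σ.1.A2 - m))
    -- (iv) the vertical components of ∂ (equal algebraic filtration) are exactly ∂_V
    (hV : ∀ (σ : SGen n) (m' : ℤ) (σ' : SGen n),
      σ'.1.A1 - m' = σ.1.A1 →
        d (gen n 0 σ) (m', σ') = if σ.1.dV n = some σ'.1 ∧ m' = 0 then 1 else 0)
    -- (v) the coefficient of y_n in ∂x_n equals 1
    (hEnd : d (gen n 0 ⟨Gen.x n, hn, le_rfl⟩) (0, ⟨Gen.y n, by omega, le_rfl⟩) = 1)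
    (t s : ℝ) (ht0 : 2 / ((n : ℝ) + 1) ≤ t) (ht1 : t < 2 / (n : ℝ)) :
    -- [y_n] is in the image of H(C_{t,s}) → H(C∞) iff s ≥ (2−t)/2
    (∃ v ∈ Submodule.span (ZMod 2)
        {u : Cinf n | ∃ (m : ℤ) (σ : SGen n), ((σ.1.A2 - m : ℤ) : ℝ) ≤ (2 / t) * s + (1 - 2 / t) * ((σ.1.A1 - m : ℤ) : ℝ) ∧ u = gen n m σ},
        d v = 0 ∧ ∃ ξ : Cinf n, gen n 0 ⟨Gen.y n, by omega, le_rfl⟩ - v = d ξ) ↔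
      (2 - t) / 2 ≤ s := by
  have hd : Cinf.IsModelDifferential d :=
    ⟨hU, hM, fun m σ m' σ' h => (hF m σ m' σ' h).imp_right And.left, hV⟩
  have ht : 0 < t := lt_of_lt_of_le (by positivity) ht0
  have htn : t * n < 2 := (lt_div_iff₀ (by positivity)).1 ht1
  have htn1 : 2 ≤ t * (n + 1) := (div_le_iff₀ (by positivity)).1 ht0
  have ht2 : t ≤ 2 := by nlinarith [(Nat.one_le_cast (α := ℝ)).2 (one_le_two.trans hn)]
  simp only [Cinf.mem_span_gen_iff, Cinf.le_line_iff_tGrading_le ht]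
  constructor
  · rintro ⟨v, hv, -, ξ, hξ⟩
    by_contra! hs
    exact Cinf.gen_y_top_sub_ne_d_of_lt hd hn hEnd ht2 htn1 hs hv ξ hξ
  · intro hs
    refine ⟨gen n 0 ⟨.y n, by omega, le_rfl⟩ - d (gen n 0 ⟨.x n, hn, le_rfl⟩),
      fun p hp => Cinf.tGrading_le_of_mem_support_sub_d_gen_x_top hd hn hEnd htn hs hp,
      by rw [map_sub, Cinf.d_gen_y_top_eq_zero hd (by omega), hdd, sub_zero],
      gen n 0 ⟨.x n, hn, le_rfl⟩, by abel⟩
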